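/- arXiv:math/0702567 — 4 statements merged into one kernel-verified Lean document; each statement's English description precedes it below -/
import Mathlib

section
/- For every matroid M, the number of cyclic flats of M is at most the number of bases of M. -/
open Set

namespace Matroid

variable {α : Type*}

/-- A circuit of a matroid is a minimal dependent set. -/
def Circuit (M : Matroid α) (C : Set α) : Prop := Minimal M.Dep C

/-- A cyclic flat is a flat that is a (possibly empty) union of circuits. -/
def CyclicFlat (M : Matroid α) (F : Set α) : Prop :=
  M.IsFlat F ∧ ∃ 𝒞 : Set (Set α), (∀ C ∈ 𝒞, M.Circuit C) ∧ F = ⋃₀ 𝒞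

/-- A loop is an element whose singleton is dependent. -/
def Loop (M : Matroid α) (e : α) : Prop := M.Dep {e}

/-- A coloop is an element of the ground set that lies in every base. -/
def Coloop (M : Matroid α) (e : α) : Prop := e ∈ M.E ∧ ∀ B, M.IsBase B → e ∈ B

/-- Deletion of a set of elements from a matroid. -/
def delete' (M : Matroid α) (D : Set α) : Matroid α := M ↾ (M.E \ D)

/-- Contraction of a set of elements in a matroid, defined via duality. -/
def contract' (M : Matroid α) (X : Set α) : Matroid α := (M✶.delete' X)✶

/-- A hyperplane is a subset of the ground set whose complement is a cocircuit. -/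
def Hyperplane (M : Matroid α) (H : Set α) : Prop := H ⊆ M.E ∧ M✶.Circuit (M.E \ H)

end Matroid

open Matroid

/-!
Fix an injective weight `w` on the ground set. For a cyclic flat `Z`, take a basis `L` of `Z` of
minimal weight and extend it to a base `B` of maximal weight among bases containing `L`. Then `L`
is exactly the set of elements of `B` that can be exchanged for a heavier element: an element of
`B \ L` cannot, by maximality of `B`; an element `x ∈ L` lies in a circuit inside `Z`, so it can be
exchanged within `Z` for some `y ∈ Z \ L`, which is heavier by minimality of `L`. Hence
`Z = cl L` is determined by `B`, and `Z ↦ B` is injective.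
-/

section Exchange

variable {α β : Type*} [AddCommMonoid β] {w : α → β} {S : Set α} {x y : α}

lemma finsum_mem_insert_sdiff_singleton_add (hS : S.Finite) (hx : x ∈ S) (hy : y ∉ S) :
    (∑ᶠ i ∈ insert y (S \ {x}), w i) + w x = (∑ᶠ i ∈ S, w i) + w y := by
  have hS' : ∑ᶠ i ∈ S, w i = w x + ∑ᶠ i ∈ S \ {x}, w i := by
    conv_lhs => rw [← insert_eq_of_mem hx, ← insert_sdiff_singleton]
    exact finsum_mem_insert _ (fun h ↦ h.2 rfl) hS.sdiff
  rw [finsum_mem_insert _ (fun h ↦ hy h.1) hS.sdiff, hS']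
  abel

variable [PartialOrder β] [IsOrderedCancelAddMonoid β]

lemma le_of_finsum_mem_le_insert_sdiff_singleton (hS : S.Finite) (hx : x ∈ S) (hy : y ∉ S)
    (h : ∑ᶠ i ∈ S, w i ≤ ∑ᶠ i ∈ insert y (S \ {x}), w i) : w x ≤ w y := by
  have h' := add_le_add_left h (w x)
  rw [finsum_mem_insert_sdiff_singleton_add hS hx hy] at h'
  exact le_of_add_le_add_left h'

lemma le_of_finsum_mem_insert_sdiff_singleton_le (hS : S.Finite) (hx : x ∈ S) (hy : y ∉ S)
    (h : ∑ᶠ i ∈ insert y (S \ {x}), w i ≤ ∑ᶠ i ∈ S, w i) : w y ≤ w x := by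
  have h' := add_le_add_left h (w x)
  rw [finsum_mem_insert_sdiff_singleton_add hS hx hy] at h'
  exact le_of_add_le_add_left h'

end Exchange

namespace Matroid

variable {α : Type*} {M : Matroid α} {B L Z : Set α} {x y : α}

lemma CyclicFlat.mem_closure_sdiff_singleton (hZ : M.CyclicFlat Z) (hx : x ∈ Z) :
    x ∈ M.closure (Z \ {x}) := by
  obtain ⟨-, 𝒞, h𝒞, rfl⟩ := hZ
  obtain ⟨C, hC, hxC⟩ := mem_sUnion.1 hx
  have hCx : x ∈ M.closure (C \ {x}) :=
    IsCircuit.mem_closure_sdiff_singleton_of_mem (h𝒞 C hC) hxC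
  exact M.closure_subset_closure (sdiff_subset_sdiff_left (subset_sUnion_of_mem hC)) hCx

lemma IsBasis.exists_exchange_of_mem_closure_sdiff_singleton (hL : M.IsBasis L Z) (hx : x ∈ L)
    (hxZ : x ∈ M.closure (Z \ {x})) : ∃ y ∈ Z \ L, M.IsBasis (insert y (L \ {x})) Z := by
  obtain ⟨J, hJ⟩ := M.exists_isBasis (Z \ {x}) (sdiff_subset.trans hL.subset_ground)
  have hJZ : M.IsBasis J Z := hJ.isBasis_of_closure_eq_closure (hJ.subset.trans sdiff_subset)
    (closure_sdiff_singleton_eq_closure hxZ) hL.subset_ground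
  obtain ⟨y, ⟨hyJ, hyL⟩, hK⟩ :=
    hL.restrict_isBase.exchange hJZ.restrict_isBase ⟨hx, fun h ↦ (hJ.subset h).2 rfl⟩
  exact ⟨y, ⟨hJZ.subset hyJ, hyL⟩, (isBase_restrict_iff hL.subset_ground).1 hK⟩

lemma IsBase.exchange_isBase_of_mem_closure (hB : M.IsBase B) (hx : x ∈ B)
    (hxy : x ∈ M.closure (insert y (B \ {x}))) (hy : y ∈ M.E) :
    M.IsBase (insert y (B \ {x})) := by
  refine hB.exchange_base_of_notMem_closure hx (fun hycl ↦ ?_)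
  rw [closure_insert_eq_of_mem_closure hycl] at hxy
  exact hB.indep.notMem_closure_sdiff_of_mem hx hxy

section Weighted

variable {β : Type*} [AddCommMonoid β] [LinearOrder β] [IsOrderedCancelAddMonoid β] {w : α → β}

def upExchangeable (M : Matroid α) (w : α → β) (B : Set α) : Set α :=
  {x ∈ B | ∃ y ∉ B, w x < w y ∧ M.IsBase (insert y (B \ {x}))}

lemma upExchangeable_subset_of_forall_le (hBfin : B.Finite) (hLB : L ⊆ B)
    (hmax : ∀ B', M.IsBase B' → L ⊆ B' → ∑ᶠ i ∈ B', w i ≤ ∑ᶠ i ∈ B, w i) :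
    M.upExchangeable w B ⊆ L := by
  rintro x ⟨hxB, y, hyB, hxy, hB'⟩
  by_contra hxL
  have hLB' : L ⊆ insert y (B \ {x}) :=
    (subset_sdiff_singleton hLB hxL).trans (subset_insert _ _)
  exact (le_of_finsum_mem_insert_sdiff_singleton_le hBfin hxB hyB (hmax _ hB' hLB')).not_gt hxy

lemma CyclicFlat.subset_upExchangeable (hZ : M.CyclicFlat Z) (hw : InjOn w M.E)
    (hL : M.IsBasis L Z) (hLfin : L.Finite)
    (hmin : ∀ L', M.IsBasis L' Z → ∑ᶠ i ∈ L, w i ≤ ∑ᶠ i ∈ L', w i) (hB : M.IsBase B)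
    (hLB : L ⊆ B) : L ⊆ M.upExchangeable w B := by
  intro x hx
  have hxZ := hL.subset hx
  obtain ⟨y, ⟨hyZ, hyL⟩, hK⟩ :=
    hL.exists_exchange_of_mem_closure_sdiff_singleton hx (hZ.mem_closure_sdiff_singleton hxZ)
  have hyB : y ∉ B := fun hyB ↦
    (hL.insert_dep ⟨hyZ, hyL⟩).not_indep (hB.indep.subset (insert_subset hyB hLB))
  have hxy : w x < w y :=
    (le_of_finsum_mem_le_insert_sdiff_singleton hLfin hx hyL (hmin _ hK)).lt_of_ne fun h ↦
      hyL (hw (hL.subset_ground hxZ) (hL.subset_ground hyZ) h ▸ hx)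
  have hxcl : x ∈ M.closure (insert y (B \ {x})) :=
    M.closure_subset_closure (insert_subset_insert (sdiff_subset_sdiff_left hLB))
      (hK.subset_closure hxZ)
  exact ⟨hLB hx, y, hyB, hxy,
    hB.exchange_isBase_of_mem_closure (hLB hx) hxcl (hL.subset_ground hyZ)⟩

lemma CyclicFlat.exists_isBase_closure_upExchangeable_eq (hfin : M.E.Finite)
    (hw : InjOn w M.E) (hZ : M.CyclicFlat Z) :
    ∃ B, M.IsBase B ∧ M.closure (M.upExchangeable w B) = Z := by
  obtain ⟨L, hL, hmin⟩ := exists_min_image {L | M.IsBasis L Z} (fun L ↦ ∑ᶠ i ∈ L, w i)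
    (hfin.finite_subsets.subset fun L hL ↦ hL.indep.subset_ground)
    (M.exists_isBasis Z hZ.1.subset_ground)
  obtain ⟨B, ⟨hB, hLB⟩, hmax⟩ := exists_max_image {B | M.IsBase B ∧ L ⊆ B}
    (fun B ↦ ∑ᶠ i ∈ B, w i) (hfin.finite_subsets.subset fun B hB ↦ hB.1.subset_ground)
    hL.indep.exists_isBase_superset
  have hBL : M.upExchangeable w B = L :=
    (upExchangeable_subset_of_forall_le (hfin.subset hB.subset_ground) hLB
      fun B' hB' hLB' ↦ hmax B' ⟨hB', hLB'⟩).antisymm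
    (hZ.subset_upExchangeable hw hL (hfin.subset hL.indep.subset_ground) hmin hB hLB)
  exact ⟨B, hB, by rw [hBL, hL.closure_eq_closure, hZ.1.closure]⟩

end Weighted

end Matroid

/-- The number of cyclic flats of a matroid is at most the number of bases. -/
theorem stmt0 {α : Type*} (M : Matroid α) (hfin : M.E.Finite) :
    {F | M.CyclicFlat F}.ncard ≤ {B | M.IsBase B}.ncard := by
  obtain ⟨w, hw⟩ := countable_iff_exists_injOn.1 hfin.countable
  choose! φ hφ hφZ using fun Z (hZ : M.CyclicFlat Z) ↦
    hZ.exists_isBase_closure_upExchangeable_eq hfin hw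
  refine ncard_le_ncard_of_injOn φ hφ (fun Z hZ Z' hZ' h ↦ ?_)
    (hfin.finite_subsets.subset fun B hB ↦ hB.subset_ground)
  rw [← hφZ Z hZ, ← hφZ Z' hZ', h]
end

section
/- Let M_n (n ≥ 2) be the matroid obtained from U_{n,2n} by adding one element parallel to an existing element. Then M_n has exactly three cyclic flats: the empty set, the 2-element parallel class, and the whole ground set; and the number of dependent hyperplanes of M_n is binomial(2n−1, n−2). -/
open Set

open Matroid

/-!
A dependent set of `M` either contains the parallel pair `{a, b}` or has more than `n` elements,
and every set with more than `n` elements spans. Hence a circuit other than `{a, b}` is spanning,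
so the only flat containing it is the ground set, while `∅` and `{a, b} = cl {a}` are flats
because `n ≥ 2`. Hyperplanes are the maximal nonspanning sets: a dependent one must contain
`{a, b}`, and maximality then forces it to have exactly `n` elements, so dependent hyperplanes
correspond to the `(n - 2)`-subsets of the remaining `2n - 1` elements.
-/

namespace Set

variable {α : Type*} {s t : Set α}

lemma ncard_setOf_superset_subset_ncard_eq (ht : t.Finite) (hst : s ⊆ t) {k : ℕ}
    (hk : s.ncard ≤ k) :
    {u | s ⊆ u ∧ u ⊆ t ∧ u.ncard = k}.ncard = (t.ncard - s.ncard).choose (k - s.ncard) := by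
  have hs : s.Finite := ht.subset hst
  have himage : {u | s ⊆ u ∧ u ⊆ t ∧ u.ncard = k} =
      (· ∪ s) '' {v ⊆ t \ s | v.ncard = k - s.ncard} := by
    ext u
    constructor
    · rintro ⟨hsu, hut, huk⟩
      refine ⟨u \ s, ⟨sdiff_subset_sdiff_left hut, ?_⟩, sdiff_union_of_subset hsu⟩
      rw [ncard_sdiff hsu hs, huk]
    · rintro ⟨v, ⟨hvt, hvk⟩, rfl⟩
      have hdisj : Disjoint v s := (subset_sdiff.1 hvt).2
      refine ⟨subset_union_right, union_subset (hvt.trans sdiff_subset) hst, ?_⟩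
      rw [ncard_union_eq hdisj (ht.subset (hvt.trans sdiff_subset)) hs, hvk]
      omega
  have hinj : InjOn (· ∪ s) {v ⊆ t \ s | v.ncard = k - s.ncard} := by
    rintro v ⟨hvt, -⟩ w ⟨hwt, -⟩ hvw
    calc v = (v ∪ s) \ s := ((subset_sdiff.1 hvt).2.sup_sdiff_cancel_right).symm
      _ = (w ∪ s) \ s := congrArg (· \ s) hvw
      _ = w := (subset_sdiff.1 hwt).2.sup_sdiff_cancel_right
  rw [himage, hinj.ncard_image, ncard_powerset_ncard ht.sdiff, ncard_sdiff hst hs]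

end Set

namespace Matroid

variable {α : Type*} {M : Matroid α} {H S : Set α}

lemma hyperplane_iff_maximal_nonspanning :
    M.Hyperplane H ↔ Maximal (fun X ↦ ¬ M.Spanning X ∧ X ⊆ M.E) H := by
  change H ⊆ M.E ∧ M.IsCocircuit (M.E \ H) ↔ _
  rw [isCocircuit_iff_minimal_compl_nonspanning', minimal_subset_iff, maximal_subset_iff]
  constructor
  · rintro ⟨hHE, ⟨hH, -⟩, hmin⟩
    rw [sdiff_sdiff_cancel_left hHE] at hH
    refine ⟨⟨hH, hHE⟩, fun X ⟨hX, hXE⟩ hHX ↦ ?_⟩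
    have hcompl : M.E \ H = M.E \ X :=
      hmin ⟨by rwa [sdiff_sdiff_cancel_left hXE], sdiff_subset⟩ (sdiff_subset_sdiff_right hHX)
    rw [← sdiff_sdiff_cancel_left hHE, hcompl, sdiff_sdiff_cancel_left hXE]
  · rintro ⟨⟨hH, hHE⟩, hmax⟩
    refine ⟨hHE, ⟨by rwa [sdiff_sdiff_cancel_left hHE], sdiff_subset⟩, fun K ⟨hK, hKE⟩ hKH ↦ ?_⟩
    have hHK : H ⊆ M.E \ K := subset_sdiff.2 ⟨hHE, (subset_sdiff.1 hKH).2.symm⟩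
    rw [hmax ⟨hK, sdiff_subset⟩ hHK, sdiff_sdiff_cancel_left hKE]

lemma IsFlat.eq_ground_of_spanning_subset {F : Set α} (hF : M.IsFlat F) (hS : M.Spanning S)
    (hSF : S ⊆ F) : F = M.E := by
  rw [← hF.closure, hS.closure_eq_of_superset hSF]

lemma sUnion_setOf_isCircuit_eq_ground (h : ∀ e ∈ M.E, ¬ M.IsColoop e) :
    ⋃₀ {C | M.IsCircuit C} = M.E := by
  refine subset_antisymm (sUnion_subset fun C hC ↦ hC.subset_ground) fun e he ↦ ?_
  obtain ⟨C, hC, heC⟩ := exists_mem_isCircuit_of_not_isColoop he (h e he)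
  exact ⟨C, hC, heC⟩

/-- For `a ≠ b` and `2 ≤ n`, this is the uniform matroid `U_{n, |E| - 1}` with `b` added
parallel to `a`. -/
def IsUniformWithParallel (M : Matroid α) (n : ℕ) (a b : α) : Prop :=
  ∀ I, M.Indep I ↔ I ⊆ M.E ∧ I.ncard ≤ n ∧ ¬ {a, b} ⊆ I

namespace IsUniformWithParallel

variable {n : ℕ} {a b : α} {B C : Set α}

lemma dep_iff (hM : M.IsUniformWithParallel n a b) {D : Set α} :
    M.Dep D ↔ D ⊆ M.E ∧ (n < D.ncard ∨ {a, b} ⊆ D) := by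
  rw [Matroid.dep_iff, hM, ← not_le]
  tauto

lemma isBase_of_indep (hM : M.IsUniformWithParallel n a b) (hnE : n < M.E.ncard)
    (hB : M.Indep B) (hBn : B.ncard = n) : M.IsBase B :=
  hB.isBase_of_maximal fun J hJ hBJ ↦ eq_of_subset_of_ncard_le hBJ
    (hBn ▸ ((hM J).1 hJ).2.1) ((finite_of_ncard_pos (by omega)).subset hJ.subset_ground)

lemma exists_indep_subset (hM : M.IsUniformWithParallel n a b) (hSE : S ⊆ M.E)
    (hSn : n < S.ncard) : ∃ B ⊆ S, M.Indep B ∧ B.ncard = n := by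
  obtain ⟨B, hBS, hBn⟩ := exists_subset_card_eq
    ((Nat.le_sub_one_of_lt hSn).trans (pred_ncard_le_ncard_sdiff_singleton S b))
  refine ⟨B, hBS.trans sdiff_subset, (hM B).2 ⟨hBS.trans (sdiff_subset.trans hSE), hBn.le, ?_⟩, hBn⟩
  exact fun hab ↦ (hBS (hab (mem_insert_of_mem a rfl))).2 rfl

lemma isBase_iff (hM : M.IsUniformWithParallel n a b) (hnE : n < M.E.ncard) :
    M.IsBase B ↔ M.Indep B ∧ B.ncard = n := by
  refine ⟨fun hB ↦ ⟨hB.indep, ?_⟩, fun hB ↦ hM.isBase_of_indep hnE hB.1 hB.2⟩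
  obtain ⟨B₀, -, hB₀, hB₀n⟩ := hM.exists_indep_subset subset_rfl hnE
  rw [hB.ncard_eq_ncard_of_isBase (hM.isBase_of_indep hnE hB₀ hB₀n), hB₀n]

lemma spanning_of_lt_ncard (hM : M.IsUniformWithParallel n a b) (hnE : n < M.E.ncard)
    (hSE : S ⊆ M.E) (hSn : n < S.ncard) : M.Spanning S := by
  obtain ⟨B, hBS, hB, hBn⟩ := hM.exists_indep_subset hSE hSn
  exact (hM.isBase_of_indep hnE hB hBn).spanning_of_superset hBS

lemma not_spanning_of_pair_subset (hM : M.IsUniformWithParallel n a b) (hnE : n < M.E.ncard)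
    (hSn : S.ncard ≤ n) (hab : {a, b} ⊆ S) : ¬ M.Spanning S := by
  intro hS
  obtain ⟨B, hB, hBS⟩ := hS.exists_isBase_subset
  obtain ⟨hBi, hBn⟩ := (hM.isBase_iff hnE).1 hB
  have hBS : B = S := eq_of_subset_of_ncard_le hBS (hBn ▸ hSn)
    ((finite_of_ncard_pos (by omega)).subset hS.subset_ground)
  exact ((hM B).1 hBi).2.2 (hBS ▸ hab)

lemma isCircuit_pair (hM : M.IsUniformWithParallel n a b) (hn : 1 ≤ n) (ha : a ∈ M.E)
    (hb : b ∈ M.E) : M.IsCircuit {a, b} := by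
  refine isCircuit_iff_forall_ssubset.2 ⟨hM.dep_iff.2 ⟨pair_subset ha hb, Or.inr subset_rfl⟩,
    fun I hI ↦ (hM I).2 ⟨hI.subset.trans (pair_subset ha hb), ?_, not_subset_of_ssubset hI⟩⟩
  have := (ncard_lt_ncard hI).trans_le (ncard_insert_le a {b})
  rw [ncard_singleton] at this
  omega

lemma eq_pair_or_spanning_of_isCircuit (hM : M.IsUniformWithParallel n a b)
    (hnE : n < M.E.ncard) (hC : M.IsCircuit C) : C = {a, b} ∨ M.Spanning C := by
  obtain ⟨hCE, hCn | hab⟩ := hM.dep_iff.1 hC.dep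
  · exact Or.inr (hM.spanning_of_lt_ncard hnE hCE hCn)
  · exact Or.inl (hC.eq_of_dep_subset (hM.dep_iff.2 ⟨hab.trans hCE, Or.inr subset_rfl⟩) hab).symm

lemma closure_empty_eq (hM : M.IsUniformWithParallel n a b) (hn : 1 ≤ n) (hab : a ≠ b) :
    M.closure ∅ = ∅ := by
  refine eq_empty_of_forall_notMem fun x hx ↦ ?_
  rw [M.empty_indep.mem_closure_iff, insert_empty_eq, hM.dep_iff, ncard_singleton] at hx
  rcases hx with ⟨-, hlt | hpair⟩ | hx
  · omega
  · rw [pair_subset_iff, mem_singleton_iff, mem_singleton_iff] at hpair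
    exact hab (hpair.1.trans hpair.2.symm)
  · exact hx

lemma closure_singleton_eq_pair (hM : M.IsUniformWithParallel n a b) (hn : 2 ≤ n)
    (ha : a ∈ M.E) (hb : b ∈ M.E) (hab : a ≠ b) : M.closure {a} = {a, b} := by
  have hai : M.Indep {a} := (hM _).2 ⟨singleton_subset_iff.2 ha, by rw [ncard_singleton]; omega,
    fun h ↦ hab (h (mem_insert_of_mem a rfl)).symm⟩
  ext x
  have hxa : ({x, a} : Set α).ncard ≤ 2 := (ncard_insert_le x {a}).trans_eq (by simp)
  rw [hai.mem_closure_iff, hM.dep_iff]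
  constructor
  · rintro (⟨-, hlt | hpair⟩ | hx)
    · omega
    · obtain hbx | hba := hpair (mem_insert_of_mem a rfl)
      · exact mem_insert_of_mem a hbx.symm
      · exact absurd hba.symm hab
    · exact hx ▸ mem_insert a {b}
  · rintro (rfl | rfl)
    · exact Or.inr rfl
    · exact Or.inl ⟨pair_subset hb ha, Or.inr (pair_comm x a ▸ subset_rfl)⟩

lemma not_isColoop (hM : M.IsUniformWithParallel n a b) (hnE : n + 1 < M.E.ncard) (e : α) :
    ¬ M.IsColoop e := by
  rw [isColoop_iff_sdiff_not_spanning, not_not]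
  exact hM.spanning_of_lt_ncard (by omega) sdiff_subset
    (by have := pred_ncard_le_ncard_sdiff_singleton M.E e; omega)

lemma cyclicFlat_iff (hM : M.IsUniformWithParallel n a b) (hn : 2 ≤ n)
    (hnE : n + 1 < M.E.ncard) (ha : a ∈ M.E) (hb : b ∈ M.E) (hab : a ≠ b) {F : Set α} :
    M.CyclicFlat F ↔ F = ∅ ∨ F = {a, b} ∨ F = M.E := by
  constructor
  · rintro ⟨hF, 𝒞, h𝒞, rfl⟩
    by_cases hpair : 𝒞 ⊆ {{a, b}}
    · rcases subset_singleton_iff_eq.1 hpair with rfl | rfl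
      · exact Or.inl sUnion_empty
      · exact Or.inr (Or.inl (sUnion_singleton _))
    · obtain ⟨C, hC𝒞, hC⟩ := not_subset.1 hpair
      refine Or.inr (Or.inr (hF.eq_ground_of_spanning_subset ?_ (subset_sUnion_of_mem hC𝒞)))
      exact (hM.eq_pair_or_spanning_of_isCircuit (by omega) (h𝒞 C hC𝒞)).resolve_left hC
  · rintro (rfl | rfl | rfl)
    · exact ⟨hM.closure_empty_eq (by omega) hab ▸ M.isFlat_closure ∅, ∅, by simp,
        sUnion_empty.symm⟩
    · refine ⟨hM.closure_singleton_eq_pair hn ha hb hab ▸ M.isFlat_closure {a}, {{a, b}}, ?_,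
        (sUnion_singleton _).symm⟩
      rintro C rfl
      exact hM.isCircuit_pair (by omega) ha hb
    · exact ⟨M.ground_isFlat, {C | M.IsCircuit C}, fun _ ↦ id,
        (sUnion_setOf_isCircuit_eq_ground fun e _ ↦ hM.not_isColoop hnE e).symm⟩

lemma hyperplane_and_not_indep_iff (hM : M.IsUniformWithParallel n a b)
    (hnE : n < M.E.ncard) :
    M.Hyperplane H ∧ ¬ M.Indep H ↔ {a, b} ⊆ H ∧ H ⊆ M.E ∧ H.ncard = n := by
  have hfin : M.E.Finite := finite_of_ncard_pos (by omega)
  rw [hyperplane_iff_maximal_nonspanning, maximal_subset_iff']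
  constructor
  · rintro ⟨⟨⟨hH, hHE⟩, hmax⟩, hHi⟩
    have hHn : H.ncard ≤ n := not_lt.1 fun h ↦ hH (hM.spanning_of_lt_ncard hnE hHE h)
    have hab : {a, b} ⊆ H := by
      obtain ⟨-, h | h⟩ := hM.dep_iff.1 ⟨hHi, hHE⟩
      exacts [absurd h (not_lt.2 hHn), h]
    refine ⟨hab, hHE, hHn.antisymm (not_lt.1 fun hlt ↦ ?_)⟩
    obtain ⟨e, heE, heH⟩ :=
      exists_mem_notMem_of_ncard_lt_ncard (hlt.trans hnE) (hfin.subset hHE)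
    have hins : ¬ M.Spanning (insert e H) := hM.not_spanning_of_pair_subset hnE
      ((ncard_insert_le e H).trans (by omega)) (hab.trans (subset_insert e H))
    exact heH (hmax ⟨hins, insert_subset heE hHE⟩ (subset_insert e H) (mem_insert e H))
  · rintro ⟨hab, hHE, hHn⟩
    refine ⟨⟨⟨hM.not_spanning_of_pair_subset hnE hHn.le hab, hHE⟩, fun X ⟨hX, hXE⟩ hHX ↦ ?_⟩,
      fun hHi ↦ ((hM H).1 hHi).2.2 hab⟩
    by_contra hXH
    exact hX (hM.spanning_of_lt_ncard hnE hXE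
      (hHn ▸ ncard_lt_ncard (hHX.ssubset_of_not_subset hXH) (hfin.subset hXE)))

end IsUniformWithParallel

end Matroid

theorem stmt15_general {α : Type*} (n : ℕ) (hn : 2 ≤ n) (M : Matroid α)
    (hEcard : M.E.ncard = 2 * n + 1)
    (a b : α) (ha : a ∈ M.E) (hb : b ∈ M.E) (hab : a ≠ b)
    (hI : ∀ I, M.Indep I ↔ I ⊆ M.E ∧ I.ncard ≤ n ∧ ¬ ({a, b} ⊆ I)) :
    {F | M.CyclicFlat F} = {∅, {a, b}, M.E} ∧
    {H | M.Hyperplane H ∧ ¬ M.Indep H}.ncard = (2 * n - 1).choose (n - 2) := by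
  have hM : M.IsUniformWithParallel n a b := hI
  refine ⟨Set.ext fun F ↦ hM.cyclicFlat_iff hn (by omega) ha hb hab, ?_⟩
  have hdep : {H | M.Hyperplane H ∧ ¬ M.Indep H} = {H | {a, b} ⊆ H ∧ H ⊆ M.E ∧ H.ncard = n} :=
    Set.ext fun H ↦ hM.hyperplane_and_not_indep_iff (by omega)
  rw [hdep, Set.ncard_setOf_superset_subset_ncard_eq (Set.finite_of_ncard_pos (by omega))
    (Set.pair_subset ha hb) (by rw [Set.ncard_pair hab]; omega), Set.ncard_pair hab, hEcard]
  congr 1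

/-- Adding an element `b` parallel to an element `a` of `U_{n,2n}` gives a matroid whose
only cyclic flats are `∅`, `{a, b}` and the ground set, and whose number of dependent
hyperplanes is `binomial(2n-1, n-2)`. -/
theorem stmt15 {α : Type*} (n : ℕ) (hn : 2 ≤ n) (M : Matroid α)
    (hE : M.E.Finite) (hEcard : M.E.ncard = 2 * n + 1)
    (a b : α) (ha : a ∈ M.E) (hb : b ∈ M.E) (hab : a ≠ b)
    (hI : ∀ I, M.Indep I ↔ I ⊆ M.E ∧ I.ncard ≤ n ∧ ¬ ({a, b} ⊆ I)) :
    {F | M.CyclicFlat F} = {∅, {a, b}, M.E} ∧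
    {H | M.Hyperplane H ∧ ¬ M.Indep H}.ncard = (2 * n - 1).choose (n - 2) :=
  stmt15_general n hn M hEcard a b ha hb hab hI
end

section
/- Let M be a matroid on ground set E with a minor N isomorphic to some matroid on a set A ⊆ E, say M / X' \ Y' where (X', Y') partitions E − A and X' is independent. Suppose the minor has t > 0 circuits C'_1, …, C'_t, and for each i choose a circuit C_i of M with C_i ⊆ C'_i ∪ X' and C'_i = C_i − X'. Set X = (C_1 ∪ ⋯ ∪ C_t) − A and Y = E − (A ∪ X). Then M / X \ Y = M / X' \ Y'. -/
open Set

open Matroid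

/-! Every `C'ᵢ` lies in the ground set `A` of the minor, so `X ⊆ X'` and `Cᵢ ⊆ C'ᵢ ∪ X`.
Both minors live on `A`, and a set `I ⊆ A` independent in `M / X` is independent in `M / X'`:
otherwise it contains a circuit `C'ᵢ` of `M / X' \ Y'`, and then `I ∪ X ⊇ Cᵢ` is dependent. -/

namespace Matroid

variable {α : Type*} {M : Matroid α} {X X' D D' : Set α}

lemma contract'_eq_contract : M.contract' X = M ／ X := rfl

lemma delete'_eq_delete : M.delete' D = M ＼ D := rfl

lemma circuit_iff_isCircuit {C : Set α} : M.Circuit C ↔ M.IsCircuit C := Iff.rfl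

lemma contract_delete_eq_contract_delete_of_subset (hX : M.Indep X) (hXX' : X ⊆ X')
    (hE : (M ／ X ＼ D).E = (M ／ X' ＼ D').E)
    (hcirc : ∀ C, (M ／ X' ＼ D').IsCircuit C → ¬ M.Indep (C ∪ X)) :
    M ／ X ＼ D = M ／ X' ＼ D' := by
  refine ext_indep hE fun I hI ↦ ⟨fun hIX ↦ ?_, fun hIX' ↦ ?_⟩
  · by_contra hIX'
    obtain ⟨C, hCI, hC⟩ := ((not_indep_iff (hE ▸ hI)).1 hIX').exists_isCircuit_subset
    exact hcirc C hC <|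
      (hX.contract_indep_iff.1 hIX.of_delete).2.subset (union_subset_union_left X hCI)
  · have hIX : (M ／ X ／ (X' \ X)).Indep I := by
      rw [contract_contract, union_sdiff_cancel hXX']
      exact hIX'.of_delete
    exact hIX.of_contract.indep_delete_of_disjoint (subset_sdiff.1 hI).2

end Matroid

theorem stmt16_general {α : Type*} (M : Matroid α)
    (A X' Y' : Set α) (hA : A ⊆ M.E)
    (hpart : X' ∪ Y' = M.E \ A) (hX' : M.Indep X')
    (t : ℕ) (C' C : Fin t → Set α)
    (hC'all : ∀ D, ((M.contract' X').delete' Y').Circuit D ↔ ∃ i, D = C' i)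
    (hC : ∀ i, M.Circuit (C i) ∧ C i ⊆ C' i ∪ X' ∧ C' i = C i \ X') :
    (M.contract' ((⋃ i, C i) \ A)).delete' (M.E \ (A ∪ ((⋃ i, C i) \ A))) =
      (M.contract' X').delete' Y' := by
  simp only [contract'_eq_contract, delete'_eq_delete, circuit_iff_isCircuit] at hC'all hC ⊢
  set X := (⋃ i, C i) \ A
  have hX'A : Disjoint X' A :=
    disjoint_sdiff_left.mono_left (hpart ▸ subset_union_left : X' ⊆ M.E \ A)
  have hground : (M ／ X' ＼ Y').E = A := by
    rw [delete_ground, contract_ground, sdiff_sdiff, hpart, sdiff_sdiff_cancel_left hA]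
  have hC'A (i : Fin t) : C' i ⊆ A :=
    hground ▸ ((hC'all (C' i)).2 ⟨i, rfl⟩).subset_ground
  have hCX (i : Fin t) : C i ⊆ C' i ∪ X := fun e he ↦ by
    obtain hC' | hX' := (hC i).2.1 he
    · exact .inl hC'
    · exact .inr ⟨mem_iUnion_of_mem i he, hX'A.notMem_of_mem_left hX'⟩
  have hXX' : X ⊆ X' := fun e ⟨he, heA⟩ ↦ by
    obtain ⟨i, hei⟩ := mem_iUnion.1 he
    exact ((hC i).2.1 hei).resolve_left fun h ↦ heA (hC'A i h)
  refine contract_delete_eq_contract_delete_of_subset (hX'.subset hXX') hXX' ?_ fun D hD ↦ ?_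
  · rw [hground, delete_ground, contract_ground, sdiff_sdiff_comm,
      sdiff_sdiff_cancel_left (union_subset hA (hXX'.trans hX'.subset_ground)), union_sdiff_right,
      (hX'A.mono_left hXX').symm.sdiff_eq_left]
  · obtain ⟨i, rfl⟩ := (hC'all D).1 hD
    exact fun h ↦ (hC i).1.dep.not_indep (h.subset (hCX i))

/-- If `M / X' \ Y'` is a minor on `A` with circuits `C'_1, …, C'_t` (`t > 0`), and
`C_i` is a circuit of `M` with `C_i ⊆ C'_i ∪ X'` and `C'_i = C_i \ X'`, then contracting
`X = (C_1 ∪ ⋯ ∪ C_t) \ A` and deleting `Y = E \ (A ∪ X)` yields the same minor. -/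
theorem stmt16 {α : Type*} (M : Matroid α) (hfin : M.E.Finite)
    (A X' Y' : Set α) (hA : A ⊆ M.E)
    (hpart : X' ∪ Y' = M.E \ A) (hdisj : Disjoint X' Y') (hX' : M.Indep X')
    (t : ℕ) (ht : 0 < t) (C' C : Fin t → Set α)
    (hC'all : ∀ D, ((M.contract' X').delete' Y').Circuit D ↔ ∃ i, D = C' i)
    (hC : ∀ i, M.Circuit (C i) ∧ C i ⊆ C' i ∪ X' ∧ C' i = C i \ X') :
    (M.contract' ((⋃ i, C i) \ A)).delete' (M.E \ (A ∪ ((⋃ i, C i) \ A))) =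
      (M.contract' X').delete' Y' :=
  stmt16_general M A X' Y' hA hpart hX' t C' C hC'all hC
end

section
/- For two simple graphs G and G' each with at least 3 vertices, G and G' are isomorphic if and only if the rank-3 matroids Φ(G) and Φ(G') are isomorphic. -/
open Set

open Matroid

/-- The ground set of the rank-3 matroid `Φ(G)`. -/
def phiGround {V : Type*} (G : SimpleGraph V) : Set (V ⊕ V ⊕ Sym2 V) :=
  Set.range Sum.inl ∪ Set.range (Sum.inr ∘ Sum.inl) ∪
    (Sum.inr ∘ Sum.inr) '' G.edgeSet

/-- The non-spanning circuits of `Φ(G)`: the parallel pairs `{x_i, x'_i}`, and the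
triples `{z_i, z_j, y_k}` where `e_k` joins `v_i` to `v_j`. -/
def phiNSCircuit {V : Type*} (G : SimpleGraph V) (C : Set (V ⊕ V ⊕ Sym2 V)) : Prop :=
  (∃ i : V, C = {Sum.inl i, Sum.inr (Sum.inl i)}) ∨
  (∃ i j : V, ∃ zi zj : V ⊕ V ⊕ Sym2 V, G.Adj i j ∧
    (zi = Sum.inl i ∨ zi = Sum.inr (Sum.inl i)) ∧
    (zj = Sum.inl j ∨ zj = Sum.inr (Sum.inl j)) ∧
    C = {zi, zj, Sum.inr (Sum.inr s(i, j))})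

/-- `M` is (a copy of) the rank-3 matroid `Φ(G)`: its ground set is `X ∪ X' ∪ Y` and its
independent sets are the subsets of size at most 3 containing no non-spanning circuit. -/
def IsPhi {V : Type*} (G : SimpleGraph V) (M : Matroid (V ⊕ V ⊕ Sym2 V)) : Prop :=
  M.E = phiGround G ∧
  ∀ I, M.Indep I ↔ I ⊆ phiGround G ∧ I.ncard ≤ 3 ∧ ∀ C, phiNSCircuit G C → ¬ C ⊆ I

/-- Matroid isomorphism: a bijection between ground sets preserving independence. -/
def MatroidIso {α β : Type*} (M : Matroid α) (N : Matroid β) : Prop :=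
  ∃ f : α → β, Set.BijOn f M.E N.E ∧ ∀ I ⊆ M.E, (M.Indep I ↔ N.Indep (f '' I))

/-! The dependent pairs of `Φ(G)` are exactly the parallel pairs `{x_i, x'_i}`, so an
isomorphism `Φ(G) ≅ Φ(G')` permutes these pairs, hence induces a bijection `V → W`, and sends
the `y_k` to the `y_k`. Distinct vertices `v_i, v_j` are adjacent iff `{x_i, x_j, y}` is
dependent for some `y`, a property the isomorphism preserves. Conversely, a graph isomorphism
relabels the ground set and carries non-spanning circuits to non-spanning circuits. -/

section

variable {V W : Type*} {G : SimpleGraph V} {G' : SimpleGraph W}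

/-- The vertex `v_i` of `x_i` and of `x'_i`; the elements `y_k` get `none`. -/
def phiVertex : V ⊕ V ⊕ Sym2 V → Option V
  | .inl i => some i
  | .inr (.inl i) => some i
  | .inr (.inr _) => none

lemma phiVertex_inl (i : V) : phiVertex (Sum.inl i : V ⊕ V ⊕ Sym2 V) = some i := rfl

lemma phiVertex_eq_some_iff {z : V ⊕ V ⊕ Sym2 V} {i : V} :
    phiVertex z = some i ↔ z = Sum.inl i ∨ z = Sum.inr (Sum.inl i) := by
  rcases z with a | a | s <;> simp [phiVertex]

lemma phiVertex_eq_none_iff {z : V ⊕ V ⊕ Sym2 V} :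
    phiVertex z = none ↔ ∃ s, z = Sum.inr (Sum.inr s) := by
  rcases z with a | a | s <;> simp [phiVertex]

lemma mem_phiGround_of_phiVertex_eq_some {z : V ⊕ V ⊕ Sym2 V} {i : V}
    (h : phiVertex z = some i) : z ∈ phiGround G := by
  rcases phiVertex_eq_some_iff.1 h with rfl | rfl <;> simp [phiGround]

lemma inr_inr_mem_phiGround_iff {s : Sym2 V} :
    Sum.inr (Sum.inr s) ∈ phiGround G ↔ s ∈ G.edgeSet := by
  simp [phiGround]

lemma ncard_triple_eq_three {a b : V ⊕ V ⊕ Sym2 V} {i j : V} {s : Sym2 V} (hij : i ≠ j)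
    (ha : phiVertex a = some i) (hb : phiVertex b = some j) :
    ({a, b, Sum.inr (Sum.inr s)} : Set (V ⊕ V ⊕ Sym2 V)).ncard = 3 := by
  refine Set.ncard_eq_three.2 ⟨a, b, _, ?_, ?_, ?_, rfl⟩ <;> rintro rfl <;> simp_all [phiVertex]

def PhiIndep (G : SimpleGraph V) (I : Set (V ⊕ V ⊕ Sym2 V)) : Prop :=
  I ⊆ phiGround G ∧ I.ncard ≤ 3 ∧ ∀ C, phiNSCircuit G C → ¬ C ⊆ I

lemma not_phiIndep_iff {I : Set (V ⊕ V ⊕ Sym2 V)} (hI : I ⊆ phiGround G)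
    (hcard : I.ncard ≤ 3) : ¬ PhiIndep G I ↔ ∃ C, phiNSCircuit G C ∧ C ⊆ I := by
  simp [PhiIndep, hI, hcard]

lemma not_phiIndep_pair_iff {a b : V ⊕ V ⊕ Sym2 V} (hab : a ≠ b) (ha : a ∈ phiGround G)
    (hb : b ∈ phiGround G) :
    ¬ PhiIndep G {a, b} ↔ (phiVertex a).isSome ∧ phiVertex a = phiVertex b := by
  have hcard : ({a, b} : Set (V ⊕ V ⊕ Sym2 V)).ncard = 2 := Set.ncard_pair hab
  rw [not_phiIndep_iff (Set.pair_subset ha hb) (by omega)]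
  constructor
  · rintro ⟨C, ⟨i, rfl⟩ | ⟨i, j, zi, zj, hij, hzi, hzj, rfl⟩, hC⟩
    · have hCab := Set.eq_of_subset_of_ncard_le hC (by rw [hcard, Set.ncard_pair (by simp)])
        (Set.toFinite _)
      have hai : a ∈ ({Sum.inl i, Sum.inr (Sum.inl i)} : Set _) := hCab ▸ Set.mem_insert _ _
      have hbi : b ∈ ({Sum.inl i, Sum.inr (Sum.inl i)} : Set _) := hCab ▸ by simp
      rcases hai with rfl | rfl <;> rcases hbi with rfl | rfl <;> simp [phiVertex]
    · have := Set.ncard_le_ncard hC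
      rw [ncard_triple_eq_three hij.ne (phiVertex_eq_some_iff.2 hzi)
        (phiVertex_eq_some_iff.2 hzj)] at this
      omega
  · rintro ⟨hsome, hab'⟩
    obtain ⟨i, hai⟩ := Option.isSome_iff_exists.1 hsome
    have hbi := hab' ▸ hai
    refine ⟨{Sum.inl i, Sum.inr (Sum.inl i)}, Or.inl ⟨i, rfl⟩, ?_⟩
    rcases phiVertex_eq_some_iff.1 hai with rfl | rfl <;>
      rcases phiVertex_eq_some_iff.1 hbi with rfl | rfl <;> simp_all [Set.pair_comm]

lemma phiVertex_isSome_iff_exists_parallel {a : V ⊕ V ⊕ Sym2 V} (ha : a ∈ phiGround G) :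
    (phiVertex a).isSome ↔ ∃ b ∈ phiGround G, b ≠ a ∧ ¬ PhiIndep G {a, b} := by
  refine ⟨fun h => ?_, fun ⟨b, hb, hba, hdep⟩ =>
    ((not_phiIndep_pair_iff hba.symm ha hb).1 hdep).1⟩
  obtain ⟨i, hi⟩ := Option.isSome_iff_exists.1 h
  have partner : ∃ b, phiVertex b = some i ∧ b ≠ a := by
    rcases phiVertex_eq_some_iff.1 hi with rfl | rfl
    exacts [⟨Sum.inr (Sum.inl i), rfl, by simp⟩, ⟨Sum.inl i, rfl, by simp⟩]
  obtain ⟨b, hb, hba⟩ := partner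
  exact ⟨b, mem_phiGround_of_phiVertex_eq_some hb, hba,
    (not_phiIndep_pair_iff hba.symm ha (mem_phiGround_of_phiVertex_eq_some hb)).2
      ⟨h, hi.trans hb.symm⟩⟩

lemma adj_iff_exists_not_phiIndep_triple {a b : V ⊕ V ⊕ Sym2 V} {i j : V} (hij : i ≠ j)
    (ha : phiVertex a = some i) (hb : phiVertex b = some j) :
    G.Adj i j ↔ ∃ y ∈ phiGround G, phiVertex y = none ∧ ¬ PhiIndep G {a, b, y} := by
  constructor
  · intro hadj
    refine ⟨Sum.inr (Sum.inr s(i, j)), inr_inr_mem_phiGround_iff.2 hadj, rfl, fun h => ?_⟩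
    exact h.2.2 _ (Or.inr ⟨i, j, a, b, hadj, phiVertex_eq_some_iff.1 ha,
      phiVertex_eq_some_iff.1 hb, rfl⟩) subset_rfl
  rintro ⟨y, hy, hynone, hdep⟩
  obtain ⟨s, rfl⟩ := phiVertex_eq_none_iff.1 hynone
  have hcard := ncard_triple_eq_three (s := s) hij ha hb
  rw [not_phiIndep_iff (Set.insert_subset (mem_phiGround_of_phiVertex_eq_some ha)
    (Set.pair_subset (mem_phiGround_of_phiVertex_eq_some hb) hy)) hcard.le] at hdep
  obtain ⟨C, ⟨k, rfl⟩ | ⟨p, q, zp, zq, hpq, hzp, hzq, rfl⟩, hC⟩ := hdep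
  · have hinj : Set.InjOn phiVertex ({a, b, Sum.inr (Sum.inr s)} : Set _) := by
      rintro x (rfl | rfl | rfl) x' (rfl | rfl | rfl) h <;> simp_all [phiVertex]
    exact (Sum.inl_ne_inr <|
      hinj (hC (Set.mem_insert _ _)) (hC (Set.mem_insert_of_mem _ rfl)) rfl).elim
  · have hCeq := Set.eq_of_subset_of_ncard_le hC (by
      rw [hcard, ncard_triple_eq_three hpq.ne (phiVertex_eq_some_iff.2 hzp)
        (phiVertex_eq_some_iff.2 hzq)]) (Set.toFinite _)
    have ha' : a ∈ ({zp, zq, Sum.inr (Sum.inr s(p, q))} : Set _) := hCeq ▸ by simp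
    have hb' : b ∈ ({zp, zq, Sum.inr (Sum.inr s(p, q))} : Set _) := hCeq ▸ by simp
    rw [← phiVertex_eq_some_iff] at hzp hzq
    rcases ha' with rfl | rfl | rfl <;> rcases hb' with rfl | rfl | rfl <;>
      simp_all [phiVertex, hpq.symm]

structure IsPhiIso (G : SimpleGraph V) (G' : SimpleGraph W)
    (f : V ⊕ V ⊕ Sym2 V → W ⊕ W ⊕ Sym2 W) : Prop where
  bijOn : Set.BijOn f (phiGround G) (phiGround G')
  phiIndep_iff : ∀ I ⊆ phiGround G, PhiIndep G I ↔ PhiIndep G' (f '' I)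

namespace IsPhiIso

variable {f : V ⊕ V ⊕ Sym2 V → W ⊕ W ⊕ Sym2 W} (hf : IsPhiIso G G' f)
include hf

lemma not_phiIndep_pair_iff {a b : V ⊕ V ⊕ Sym2 V} (ha : a ∈ phiGround G)
    (hb : b ∈ phiGround G) : ¬ PhiIndep G' {f a, f b} ↔ ¬ PhiIndep G {a, b} := by
  rw [← Set.image_pair, hf.phiIndep_iff _ (Set.pair_subset ha hb)]

lemma phiVertex_isSome_iff {a : V ⊕ V ⊕ Sym2 V} (ha : a ∈ phiGround G) :
    (phiVertex (f a)).isSome ↔ (phiVertex a).isSome := by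
  rw [phiVertex_isSome_iff_exists_parallel ha,
    phiVertex_isSome_iff_exists_parallel (hf.bijOn.mapsTo ha)]
  constructor
  · rintro ⟨b', hb', hb'a, hdep⟩
    obtain ⟨b, hb, rfl⟩ := hf.bijOn.surjOn hb'
    exact ⟨b, hb, fun h => hb'a (h ▸ rfl), (hf.not_phiIndep_pair_iff ha hb).1 hdep⟩
  · rintro ⟨b, hb, hba, hdep⟩
    exact ⟨f b, hf.bijOn.mapsTo hb, fun h => hba (hf.bijOn.injOn hb ha h),
      (hf.not_phiIndep_pair_iff ha hb).2 hdep⟩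

lemma phiVertex_eq_iff {a b : V ⊕ V ⊕ Sym2 V} (ha : a ∈ phiGround G) (hb : b ∈ phiGround G)
    (hsome : (phiVertex a).isSome) :
    phiVertex (f a) = phiVertex (f b) ↔ phiVertex a = phiVertex b := by
  obtain rfl | hab := eq_or_ne a b
  · simp only
  have hfab : f a ≠ f b := fun h => hab (hf.bijOn.injOn ha hb h)
  have key := hf.not_phiIndep_pair_iff ha hb
  rw [_root_.not_phiIndep_pair_iff hab ha hb,
    _root_.not_phiIndep_pair_iff hfab (hf.bijOn.mapsTo ha) (hf.bijOn.mapsTo hb),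
    hf.phiVertex_isSome_iff ha] at key
  simpa [hsome] using key

def vertexMap (i : V) : W :=
  (phiVertex (f (Sum.inl i))).get <|
    (hf.phiVertex_isSome_iff (mem_phiGround_of_phiVertex_eq_some rfl)).2 rfl

lemma phiVertex_apply {a : V ⊕ V ⊕ Sym2 V} {i : V} (ha : phiVertex a = some i) :
    phiVertex (f a) = some (hf.vertexMap i) := by
  rw [vertexMap, Option.some_get, hf.phiVertex_eq_iff (mem_phiGround_of_phiVertex_eq_some ha)
    (mem_phiGround_of_phiVertex_eq_some (phiVertex_inl i)) (by simp [ha]), ha, phiVertex_inl]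

lemma vertexMap_injective : Function.Injective hf.vertexMap := by
  intro i j hij
  have key := hf.phiVertex_eq_iff (mem_phiGround_of_phiVertex_eq_some (phiVertex_inl i))
    (mem_phiGround_of_phiVertex_eq_some (phiVertex_inl j)) rfl
  rw [hf.phiVertex_apply (phiVertex_inl i), hf.phiVertex_apply (phiVertex_inl j), hij] at key
  simpa [phiVertex] using key

lemma vertexMap_surjective : Function.Surjective hf.vertexMap := by
  intro j
  obtain ⟨a, ha, hfa⟩ := hf.bijOn.surjOn (mem_phiGround_of_phiVertex_eq_some (phiVertex_inl j))
  have hsome : (phiVertex a).isSome := (hf.phiVertex_isSome_iff ha).1 (by simp [hfa, phiVertex_inl])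
  obtain ⟨i, hi⟩ := Option.isSome_iff_exists.1 hsome
  exact ⟨i, Option.some_injective _ <|
    (hf.phiVertex_apply hi).symm.trans (hfa ▸ phiVertex_inl j)⟩

lemma adj_vertexMap_iff {i j : V} : G'.Adj (hf.vertexMap i) (hf.vertexMap j) ↔ G.Adj i j := by
  obtain rfl | hij := eq_or_ne i j
  · simp
  have hi := phiVertex_inl (V := V) i
  have hj := phiVertex_inl (V := V) j
  rw [adj_iff_exists_not_phiIndep_triple hij hi hj,
    adj_iff_exists_not_phiIndep_triple (hf.vertexMap_injective.ne hij)
      (hf.phiVertex_apply hi) (hf.phiVertex_apply hj)]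
  have hsub {y} (hy : y ∈ phiGround G) :
      ({Sum.inl i, Sum.inl j, y} : Set _) ⊆ phiGround G :=
    Set.insert_subset (mem_phiGround_of_phiVertex_eq_some hi)
      (Set.pair_subset (mem_phiGround_of_phiVertex_eq_some hj) hy)
  have hnone {y} (hy : y ∈ phiGround G) : phiVertex (f y) = none ↔ phiVertex y = none := by
    simpa using (hf.phiVertex_isSome_iff hy).not
  constructor
  · rintro ⟨y', hy', hnone', hdep⟩
    obtain ⟨y, hy, rfl⟩ := hf.bijOn.surjOn hy'
    refine ⟨y, hy, (hnone hy).1 hnone', fun h => hdep ?_⟩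
    simpa [Set.image_insert_eq] using (hf.phiIndep_iff _ (hsub hy)).1 h
  · rintro ⟨y, hy, hnone', hdep⟩
    refine ⟨f y, hf.bijOn.mapsTo hy, (hnone hy).2 hnone', fun h => hdep ?_⟩
    exact (hf.phiIndep_iff _ (hsub hy)).2 (by simpa [Set.image_insert_eq] using h)

noncomputable def graphIso : G ≃g G' where
  toEquiv := Equiv.ofBijective hf.vertexMap ⟨hf.vertexMap_injective, hf.vertexMap_surjective⟩
  map_rel_iff' := hf.adj_vertexMap_iff

end IsPhiIso

def phiEquiv (e : V ≃ W) : V ⊕ V ⊕ Sym2 V ≃ W ⊕ W ⊕ Sym2 W :=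
  e.sumCongr <| e.sumCongr
    { toFun := Sym2.map e
      invFun := Sym2.map e.symm
      left_inv := fun s => by simp [Sym2.map_map]
      right_inv := fun s => by simp [Sym2.map_map] }

lemma phiEquiv_symm (e : G ≃g G') :
    phiEquiv e.symm.toEquiv = (phiEquiv e.toEquiv).symm := rfl

lemma phiEquiv_mem_phiGround_iff (e : G ≃g G') {z : V ⊕ V ⊕ Sym2 V} :
    phiEquiv e.toEquiv z ∈ phiGround G' ↔ z ∈ phiGround G := by
  rcases z with i | i | s
  · simp [phiGround, phiEquiv]
  · simp [phiGround, phiEquiv]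
  · exact (inr_inr_mem_phiGround_iff.trans e.map_mem_edgeSet_iff).trans
      inr_inr_mem_phiGround_iff.symm

lemma phiNSCircuit.image_phiEquiv (e : G ≃g G') {C : Set (V ⊕ V ⊕ Sym2 V)}
    (hC : phiNSCircuit G C) : phiNSCircuit G' (phiEquiv e.toEquiv '' C) := by
  rcases hC with ⟨i, rfl⟩ | ⟨i, j, zi, zj, hij, hzi, hzj, rfl⟩
  · exact Or.inl ⟨e i, by simp [Set.image_insert_eq, phiEquiv]⟩
  · refine Or.inr ⟨e i, e j, phiEquiv e.toEquiv zi, phiEquiv e.toEquiv zj,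
      e.map_adj_iff.2 hij, ?_, ?_, by simp [Set.image_insert_eq, phiEquiv]⟩
    · rcases hzi with rfl | rfl <;> simp [phiEquiv]
    · rcases hzj with rfl | rfl <;> simp [phiEquiv]

lemma PhiIndep.image_phiEquiv (e : G ≃g G') {I : Set (V ⊕ V ⊕ Sym2 V)}
    (hI : PhiIndep G I) : PhiIndep G' (phiEquiv e.toEquiv '' I) := by
  refine ⟨?_, ?_, fun C hC hCI => hI.2.2 _ (hC.image_phiEquiv e.symm) ?_⟩
  · rintro _ ⟨z, hz, rfl⟩
    exact (phiEquiv_mem_phiGround_iff e).2 (hI.1 hz)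
  · rw [Set.ncard_image_of_injective _ (Equiv.injective _)]
    exact hI.2.1
  · rw [← (phiEquiv e.toEquiv).symm_image_image I]
    exact Set.image_mono hCI

lemma isPhiIso_phiEquiv (e : G ≃g G') : IsPhiIso G G' (phiEquiv e.toEquiv) where
  bijOn := Equiv.bijOn _ fun _ => phiEquiv_mem_phiGround_iff e
  phiIndep_iff I _ := ⟨fun h => h.image_phiEquiv e, fun h => by
    simpa only [phiEquiv_symm e, Equiv.symm_image_image] using h.image_phiEquiv e.symm⟩

lemma matroidIso_iff_exists_isPhiIso {M : Matroid (V ⊕ V ⊕ Sym2 V)}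
    {N : Matroid (W ⊕ W ⊕ Sym2 W)} (hM : IsPhi G M) (hN : IsPhi G' N) :
    MatroidIso M N ↔ ∃ f, IsPhiIso G G' f := by
  simp only [MatroidIso, hM.1, hN.1, hM.2, hN.2]
  exact exists_congr fun _ => ⟨fun h => ⟨h.1, h.2⟩, fun h => ⟨h.1, h.2⟩⟩

end

theorem stmt18_general {V W : Type*}
    (G : SimpleGraph V) (G' : SimpleGraph W)
    (M : Matroid (V ⊕ V ⊕ Sym2 V)) (N : Matroid (W ⊕ W ⊕ Sym2 W))
    (hM : IsPhi G M) (hN : IsPhi G' N) :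
    Nonempty (G ≃g G') ↔ MatroidIso M N := by
  rw [matroidIso_iff_exists_isPhiIso hM hN]
  exact ⟨fun ⟨e⟩ => ⟨_, isPhiIso_phiEquiv e⟩, fun ⟨_, hf⟩ => ⟨hf.graphIso⟩⟩

/-- Two simple graphs on at least three vertices are isomorphic if and only if the
matroids `Φ(G)` and `Φ(G')` are isomorphic. -/
theorem stmt18 {V W : Type*} [Fintype V] [Fintype W]
    (G : SimpleGraph V) (G' : SimpleGraph W)
    (hV : 3 ≤ Fintype.card V) (hW : 3 ≤ Fintype.card W)
    (M : Matroid (V ⊕ V ⊕ Sym2 V)) (N : Matroid (W ⊕ W ⊕ Sym2 W))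
    (hM : IsPhi G M) (hN : IsPhi G' N) :
    Nonempty (G ≃g G') ↔ MatroidIso M N :=
  stmt18_general G G' M N hM hN
end
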